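/- arXiv:2001.09602 — 5 statements merged into one kernel-verified Lean document; each statement's English description precedes it below -/
import Mathlib

section
/- Hudson's identity for a single negative multinomial observation: let $X \sim \mathrm{NM}_m(r, p)$ with $r > 0$ and $p \in D_m$, and let $h : \mathbb{N}_0^m \to \mathbb{R}$ be nonnegative with $h(x) = 0$ whenever $x_i = 0$, for a fixed index $i$. Then $E[h(X)/p_i] = E\left[\frac{r + \sum_j X_j}{X_i + 1} h(X + e_i)\right]$, where $e_i$ is the $i$th standard unit vector. -/
open scoped BigOperators

/-- Hudson's identity for a single negative multinomial observation, stated in `[0,∞]`. -/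
theorem hudson_identity (m : ℕ) (r : ℝ) (hr : 0 < r)
    (p : Fin m → ℝ) (hp : ∀ j, 0 < p j) (hps : ∑ j, p j < 1)
    (i : Fin m) (h : (Fin m → ℕ) → ℝ) (hpos : ∀ x, 0 ≤ h x)
    (hzero : ∀ x : Fin m → ℕ, x i = 0 → h x = 0) :
    (∑' x : Fin m → ℕ, ENNReal.ofReal
        ((Real.Gamma (r + ∑ j, (x j : ℝ)) / (Real.Gamma r * ∏ j, (Nat.factorial (x j) : ℝ)) *
          (1 - ∑ j, p j) ^ r * ∏ j, p j ^ (x j)) * (h x / p i))) =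
      ∑' x : Fin m → ℕ, ENNReal.ofReal
        ((Real.Gamma (r + ∑ j, (x j : ℝ)) / (Real.Gamma r * ∏ j, (Nat.factorial (x j) : ℝ)) *
          (1 - ∑ j, p j) ^ r * ∏ j, p j ^ (x j)) *
            ((r + ∑ j, (x j : ℝ)) / (x i + 1) *
              h (Function.update x i (x i + 1)))) := by
  set g : (Fin m → ℕ) → ENNReal := fun x => ENNReal.ofReal
      ((Real.Gamma (r + ∑ j, (x j : ℝ)) / (Real.Gamma r * ∏ j, (Nat.factorial (x j) : ℝ)) *
        (1 - ∑ j, p j) ^ r * ∏ j, p j ^ (x j)) * (h x / p i)) with hg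
  set T : (Fin m → ℕ) → (Fin m → ℕ) := fun x => Function.update x i (x i + 1) with hTdef
  have hTinj : Function.Injective T := by
    intro a b hab
    funext j
    by_cases hj : j = i
    · subst hj
      have := congrFun hab j
      simpa [T, Function.update_self] using this
    · have := congrFun hab j
      simpa [T, Function.update_of_ne hj] using this
  have hsupp : Function.support g ⊆ Set.range T := by
    intro x hx
    by_cases hxi : x i = 0
    · exfalso
      apply hx
      simp [g, hzero x hxi]
    · refine ⟨Function.update x i (x i - 1), ?_⟩
      funext j
      by_cases hj : j = i
      · subst hj
        simp only [T, Function.update_self]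
        omega
      · simp [T, Function.update_of_ne hj]
  rw [← hTinj.tsum_eq hsupp]
  refine tsum_congr fun x => ?_
  simp only [g]
  congr 1
  -- pointwise real identity
  have hS0 : (0:ℝ) ≤ ∑ j, (x j : ℝ) := Finset.sum_nonneg fun j _ => by positivity
  have hrS : r + ∑ j, (x j : ℝ) ≠ 0 := by positivity
  have hcomp : ∀ (F : ℕ → ℝ), (fun j => F (T x j)) =
      Function.update (fun j => F (x j)) i (F (x i + 1)) := by
    intro F
    funext j
    by_cases hj : j = i
    · subst hj; simp [T]
    · simp [T, Function.update_of_ne hj]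
  have hbase : ∀ (F : ℕ → ℝ), ∑ j, F (x j) = F (x i) + ∑ j ∈ Finset.univ \ {i}, F (x j) := by
    intro F
    rw [← Finset.erase_eq]
    exact (Finset.add_sum_erase _ (fun j => F (x j)) (Finset.mem_univ i)).symm
  have hbaseP : ∀ (F : ℕ → ℝ), ∏ j, F (x j) = F (x i) * ∏ j ∈ Finset.univ \ {i}, F (x j) := by
    intro F
    rw [← Finset.erase_eq]
    exact (Finset.mul_prod_erase _ (fun j => F (x j)) (Finset.mem_univ i)).symm
  have e1 : (∑ j, ((T x j : ℕ) : ℝ)) = (∑ j, (x j : ℝ)) + 1 := by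
    calc (∑ j, ((T x j : ℕ) : ℝ)) = ∑ j, Function.update (fun j => ((x j : ℕ) : ℝ)) i ((x i + 1 : ℕ) : ℝ) j := by
            rw [← hcomp (fun n => (n : ℝ))]
      _ = ((x i + 1 : ℕ) : ℝ) + ∑ j ∈ Finset.univ \ {i}, (x j : ℝ) :=
            Finset.sum_update_of_mem (Finset.mem_univ i) _ _
      _ = (∑ j, (x j : ℝ)) + 1 := by
            rw [hbase (fun n => (n : ℝ))]; push_cast; ring
  have e2 : (∏ j, ((T x j).factorial : ℝ)) = ((x i : ℝ) + 1) * ∏ j, ((x j).factorial : ℝ) := by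
    calc (∏ j, ((T x j).factorial : ℝ))
        = ∏ j, Function.update (fun j => ((x j).factorial : ℝ)) i (((x i + 1).factorial : ℝ)) j := by
            rw [← hcomp (fun n => (n.factorial : ℝ))]
      _ = (((x i + 1).factorial : ℝ)) * ∏ j ∈ Finset.univ \ {i}, ((x j).factorial : ℝ) :=
            Finset.prod_update_of_mem (Finset.mem_univ i) _ _
      _ = ((x i : ℝ) + 1) * ∏ j, ((x j).factorial : ℝ) := by
            rw [hbaseP (fun n => (n.factorial : ℝ)), Nat.factorial_succ]; push_cast; ring
  have e3 : (∏ j, p j ^ (T x j)) = p i * ∏ j, p j ^ (x j) := by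
    calc (∏ j, p j ^ (T x j))
        = ∏ j, Function.update (fun j => p j ^ (x j)) i (p i ^ (x i + 1)) j := by
            refine Finset.prod_congr rfl fun j _ => ?_
            by_cases hj : j = i
            · subst hj; simp [T]
            · simp [T, Function.update_of_ne hj]
      _ = p i ^ (x i + 1) * ∏ j ∈ Finset.univ \ {i}, p j ^ (x j) :=
            Finset.prod_update_of_mem (Finset.mem_univ i) _ _
      _ = p i * ∏ j, p j ^ (x j) := by
            have hP : ∏ j, p j ^ (x j) = p i ^ (x i) * ∏ j ∈ Finset.univ \ {i}, p j ^ (x j) := by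
              rw [← Finset.erase_eq]
              exact (Finset.mul_prod_erase _ (fun j => p j ^ (x j)) (Finset.mem_univ i)).symm
            rw [hP, pow_succ]; ring
  have e4 : Real.Gamma (r + ((∑ j, (x j : ℝ)) + 1)) =
      (r + ∑ j, (x j : ℝ)) * Real.Gamma (r + ∑ j, (x j : ℝ)) := by
    rw [← add_assoc, Real.Gamma_add_one hrS]
  have hfac : (0:ℝ) < ∏ j, ((x j).factorial : ℝ) :=
    Finset.prod_pos fun j _ => by positivity
  have hΓ : (0:ℝ) < Real.Gamma r := Real.Gamma_pos_of_pos hr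
  have hTi : h (T x) = h (Function.update x i (x i + 1)) := rfl
  rw [e1, e2, e3, e4, hTi]
  have hpi : p i ≠ 0 := (hp i).ne'
  have hxi1 : ((x i : ℝ) + 1) ≠ 0 := by positivity
  field_simp
end

section
/- For a negative multinomial observation $X \sim \mathrm{NM}_m(r, p)$ with $r > 1$, the estimator $\hat{p}_i = X_i / (r + \sum_j X_j - 1)$ (defined as $0$ when $X_i = 0$) is unbiased for $p_i$: $E[X_i / (r + \sum_j X_j - 1)] = p_i$ for each $i = 1, \dots, m$. -/
/-!
Shifting the summation index by `x ↦ x + eᵢ` turns `NM(x + eᵢ) (xᵢ + 1) / (r + |x|)` into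
`pᵢ NM(x)`, because `Γ(r + |x| + 1) = (r + |x|) Γ(r + |x|)`; what remains is that the negative
multinomial masses sum to `1`. Grouped by `n = |x|`, the multinomial theorem collapses them
to `multichoose r n (∑ p)ⁿ`, and the binomial series `∑ multichoose r n qⁿ = (1 - q)^(-r)`
concludes.
-/

open scoped Nat
open Function

namespace Real

theorem Gamma_add_nat_eq_ascPochhammer_mul {r : ℝ} (hr : ∀ k : ℕ, r ≠ -k) (n : ℕ) :
    Gamma (r + n) = (ascPochhammer ℝ n).eval r * Gamma r := by
  induction n with
  | zero => simp
  | succ n ih =>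
    have hrn : r + n ≠ 0 := fun h ↦ hr n (by linarith)
    rw [Nat.cast_succ, ← add_assoc, Gamma_add_one hrn, ih, ascPochhammer_succ_right,
      Polynomial.eval_mul]
    simp only [Polynomial.eval_add, Polynomial.eval_X, Polynomial.eval_natCast]
    ring

theorem multichoose_eq_Gamma_div {r : ℝ} (hr : ∀ k : ℕ, r ≠ -k) (n : ℕ) :
    Ring.multichoose r n = Gamma (r + n) / (Gamma r * n !) := by
  have hfac := Ring.factorial_nsmul_multichoose_eq_ascPochhammer r n
  rw [Polynomial.ascPochhammer_smeval_eq_eval, nsmul_eq_mul] at hfac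
  rw [Gamma_add_nat_eq_ascPochhammer_mul hr, ← hfac,
    eq_div_iff (by simp [Gamma_ne_zero hr, n.factorial_ne_zero])]
  ring

theorem hasSum_multichoose_mul_pow {a q : ℝ} (hq : |q| < 1) :
    HasSum (fun n ↦ Ring.multichoose a n * q ^ n) ((1 - q) ^ (-a)) := by
  have hq' : q ∈ Metric.eball (0 : ℝ) 1 := by
    rw [mem_eball_zero_iff, Real.enorm_eq_ofReal_abs]
    simpa using hq
  have := (one_div_one_sub_rpow_hasFPowerSeriesOnBall_zero a).hasSum hq'
  simp only [FormalMultilinearSeries.ofScalars_apply_eq, zero_add, smul_eq_mul] at this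
  rw [rpow_neg (by linarith [le_abs_self q]), ← one_div]
  simpa only [Ring.multichoose_eq] using this

end Real

theorem hasSum_of_hasSum_fiberwise_of_nonneg {β γ : Type*} {f : β → ℝ} (hf : ∀ b, 0 ≤ f b)
    (g : β → γ) {a : γ → ℝ} {s : ℝ} (hfib : ∀ c, HasSum (fun b : g ⁻¹' {c} ↦ f b) (a c))
    (ha : HasSum a s) : HasSum f s := by
  have hsigma : Summable (f ∘ Equiv.sigmaFiberEquiv g) :=
    (summable_sigma_of_nonneg fun _ ↦ hf _).mpr
      ⟨fun c ↦ (hfib c).summable, ha.summable.congr fun c ↦ ((hfib c).tsum_eq).symm⟩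
  exact (Equiv.sigmaFiberEquiv g).hasSum_iff.mp (ha.sigma_of_hasSum hfib hsigma)

section UpdateSucc

variable {ι : Type*} [DecidableEq ι]

theorem injective_update_succ (i : ι) : Injective fun y : ι → ℕ ↦ update y i (y i + 1) := by
  intro y z h
  funext j
  have hj := congrFun h j
  rcases eq_or_ne j i with rfl | hji
  · simpa using hj
  · simpa [hji] using hj

theorem range_update_succ (i : ι) :
    Set.range (fun y : ι → ℕ ↦ update y i (y i + 1)) = {x | x i ≠ 0} := by
  ext x
  refine ⟨?_, fun hx ↦ ⟨update x i (x i - 1), ?_⟩⟩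
  · rintro ⟨y, rfl⟩
    simp
  · simp [Nat.sub_add_cancel (Nat.pos_of_ne_zero hx)]

@[to_additive]
theorem prod_apply_update_succ {M : Type*} [CommMonoid M] [Fintype ι] (F : ι → ℕ → M)
    (x : ι → ℕ) (i : ι) {c : M} (hc : F i (x i + 1) = c * F i (x i)) :
    ∏ j, F j (update x i (x i + 1) j) = c * ∏ j, F j (x j) := by
  rw [Fintype.prod_eq_mul_prod_compl i, Fintype.prod_eq_mul_prod_compl i fun j ↦ F j (x j),
    update_self, hc, mul_assoc]
  congr 2
  exact Finset.prod_congr rfl fun j hj ↦ by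
    rw [update_of_ne (Finset.mem_compl.mp hj ∘ Finset.mem_singleton.mpr)]

end UpdateSucc

section NegMultinomial

variable {ι : Type*} [Fintype ι]

noncomputable def negMultinomialMass (r : ℝ) (p : ι → ℝ) (x : ι → ℕ) : ℝ :=
  Real.Gamma (r + ∑ j, (x j : ℝ)) / (Real.Gamma r * ∏ j, ((x j)! : ℝ)) *
    (1 - ∑ j, p j) ^ r * ∏ j, p j ^ x j

theorem negMultinomialMass_eq {r : ℝ} (hr : 0 < r) (p : ι → ℝ) (x : ι → ℕ) :
    negMultinomialMass r p x = (1 - ∑ j, p j) ^ r *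
      (Ring.multichoose r (∑ j, x j) * (Nat.multinomial Finset.univ x * ∏ j, p j ^ x j)) := by
  have hspec := Nat.multinomial_spec Finset.univ x
  rw [negMultinomialMass,
    Real.multichoose_eq_Gamma_div (fun k ↦ by linarith [k.cast_nonneg (α := ℝ)]), ← hspec]
  have := Real.Gamma_pos_of_pos hr
  have : (0 : ℝ) < ∏ j, ((x j)! : ℝ) := Finset.prod_pos fun j _ ↦ by positivity
  have : (0 : ℝ) < Nat.multinomial Finset.univ x := by exact_mod_cast Nat.multinomial_pos _ _
  push_cast
  field_simp

theorem hasSum_negMultinomialMass {r : ℝ} (hr : 0 < r) {p : ι → ℝ} (hp : ∀ j, 0 ≤ p j)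
    (hps : ∑ j, p j < 1) : HasSum (negMultinomialMass r p) 1 := by
  classical
  set q := ∑ j, p j
  have hq0 : 0 ≤ q := Finset.sum_nonneg fun j _ ↦ hp j
  have hmass : ∀ x, negMultinomialMass r p x = (1 - q) ^ r *
      (Ring.multichoose r (∑ j, x j) * (Nat.multinomial Finset.univ x * ∏ j, p j ^ x j)) :=
    negMultinomialMass_eq hr p
  have hfib : ∀ n : ℕ, HasSum (fun x : (fun x : ι → ℕ ↦ ∑ j, x j) ⁻¹' {n} ↦
      negMultinomialMass r p x) ((1 - q) ^ r * (Ring.multichoose r n * q ^ n)) := by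
    intro n
    have hset : (fun x : ι → ℕ ↦ ∑ j, x j) ⁻¹' {n} =
        ((Finset.univ.piAntidiag n : Finset (ι → ℕ)) : Set (ι → ℕ)) := by
      ext x
      simp
    rw [hset, Finset.sum_pow_eq_sum_piAntidiag, Finset.mul_sum, Finset.mul_sum]
    convert (Finset.univ.piAntidiag n).hasSum (negMultinomialMass r p) using 1
    · rfl
    · exact (Finset.sum_congr rfl fun x hx ↦ by rw [hmass, (Finset.mem_piAntidiag.mp hx).1]).symm
  have hseries : HasSum (fun n : ℕ ↦ (1 - q) ^ r * (Ring.multichoose r n * q ^ n)) 1 := by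
    have h := (Real.hasSum_multichoose_mul_pow (a := r) (abs_lt.mpr ⟨by linarith, hps⟩)).mul_left
      ((1 - q) ^ r)
    rwa [← Real.rpow_add (by linarith), add_neg_cancel, Real.rpow_zero] at h
  refine hasSum_of_hasSum_fiberwise_of_nonneg (fun x ↦ ?_) _ hfib hseries
  rw [hmass, Real.multichoose_eq_Gamma_div (fun k ↦ by linarith [k.cast_nonneg (α := ℝ)])]
  have := Real.Gamma_pos_of_pos hr
  have := Real.Gamma_pos_of_pos (by positivity : 0 < r + (∑ j, x j : ℕ))
  have : 0 ≤ ∏ j, p j ^ x j := Finset.prod_nonneg fun j _ ↦ pow_nonneg (hp j) _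
  have : 0 ≤ 1 - q := by linarith
  positivity

theorem negMultinomialMass_update_succ [DecidableEq ι] {r : ℝ} (hr : 0 < r)
    (p : ι → ℝ) (x : ι → ℕ) (i : ι) :
    negMultinomialMass r p (update x i (x i + 1)) *
        ((update x i (x i + 1) i : ℝ) / (r + ∑ j, (update x i (x i + 1) j : ℝ) - 1)) =
      p i * negMultinomialMass r p x := by
  have hsum : ∑ j, (update x i (x i + 1) j : ℝ) = 1 + ∑ j, (x j : ℝ) :=
    sum_apply_update_succ (fun _ n ↦ (n : ℝ)) x i (by push_cast; ring)
  have hfac : ∏ j, ((update x i (x i + 1) j)! : ℝ) = (x i + 1) * ∏ j, ((x j)! : ℝ) :=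
    prod_apply_update_succ (fun _ n ↦ (n ! : ℝ)) x i (by push_cast [Nat.factorial_succ]; ring)
  have hpow : ∏ j, p j ^ update x i (x i + 1) j = p i * ∏ j, p j ^ x j :=
    prod_apply_update_succ (fun j n ↦ p j ^ n) x i (pow_succ' _ _)
  have hrx : 0 < r + ∑ j, (x j : ℝ) := by positivity
  have hGamma : Real.Gamma (r + (1 + ∑ j, (x j : ℝ))) =
      (r + ∑ j, (x j : ℝ)) * Real.Gamma (r + ∑ j, (x j : ℝ)) := by
    rw [← Real.Gamma_add_one hrx.ne']
    ring_nf
  have hden : r + (1 + ∑ j, (x j : ℝ)) - 1 = r + ∑ j, (x j : ℝ) := by ring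
  have := Real.Gamma_pos_of_pos hr
  have : (0 : ℝ) < ∏ j, ((x j)! : ℝ) := Finset.prod_pos fun j _ ↦ by positivity
  simp only [negMultinomialMass, hsum, hfac, hpow, hGamma, hden, update_self]
  push_cast
  field_simp

end NegMultinomial

/-- The estimator `X i / (r + ∑ X - 1)` is unbiased for `p i`. -/
theorem umvu_unbiased (m : ℕ) (r : ℝ) (hr : 1 < r)
    (p : Fin m → ℝ) (hp : ∀ j, 0 < p j) (hps : ∑ j, p j < 1) (i : Fin m) :
    ∑' x : Fin m → ℕ,
        (Real.Gamma (r + ∑ j, (x j : ℝ)) / (Real.Gamma r * ∏ j, (Nat.factorial (x j) : ℝ)) *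
          (1 - ∑ j, p j) ^ r * ∏ j, p j ^ (x j)) *
            ((x i : ℝ) / (r + (∑ j, (x j : ℝ)) - 1)) = p i := by
  have hr0 : 0 < r := by linarith
  have hsupport : (support fun x : Fin m → ℕ ↦
      negMultinomialMass r p x * ((x i : ℝ) / (r + ∑ j, (x j : ℝ) - 1))) ⊆
        Set.range fun y ↦ update y i (y i + 1) := by
    rw [range_update_succ]
    intro x hx hxi
    simp [hxi] at hx
  calc _ = ∑' y : Fin m → ℕ, negMultinomialMass r p (update y i (y i + 1)) *
        ((update y i (y i + 1) i : ℝ) / (r + ∑ j, (update y i (y i + 1) j : ℝ) - 1)) :=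
        ((injective_update_succ i).tsum_eq hsupport).symm
    _ = ∑' y, p i * negMultinomialMass r p y :=
        tsum_congr fun y ↦ negMultinomialMass_update_succ hr0 p y i
    _ = p i := by
        rw [tsum_mul_left, (hasSum_negMultinomialMass hr0 (fun j ↦ (hp j).le) hps).tsum_eq,
          mul_one]
end

section
/- Prior propriety for the hierarchical shrinkage prior with $g \equiv 1$, $\beta > 0$: the integral $\int_0^\infty t^{\alpha-1} e^{-\beta t} \left\{\frac{\Gamma(t + a_0)}{\Gamma(t + a_0 + a_\cdot)}\right\}^N dt$ is finite if and only if either $a_0 > 0$, or $a_0 = 0$ and $\alpha > N$, where $\alpha > 0$, $\beta > 0$, $a_0 \ge 0$, $a_\cdot > 0$, and $N \in \mathbb{N}$. -/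
/-!
Split `(0, ∞)` at `1`. Beyond `2` the Gamma ratio is at most `1`, since `Γ` increases on
`[2, ∞)`, so the tail is dominated by `t ^ (α - 1) * exp (-β * t)` and is always integrable.
On `(0, 1]`, for `b, c > 0` the factor `exp (-β * t) * (Γ (t + b) / Γ (t + c)) ^ N` is continuous
and positive on `[0, 1]`, so it does not affect integrability of the power of `t` in front.
For `a₀ > 0` that power is `t ^ (α - 1)`; for `a₀ = 0`, `Γ t = Γ (t + 1) / t` turns it into
`t ^ (α - 1 - N)`.
-/

open MeasureTheory Set Real

lemma Real.continuousOn_Gamma_Ioi : ContinuousOn Gamma (Ioi 0) := fun _ hs =>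
  (differentiableAt_Gamma fun m => ((neg_nonpos.2 m.cast_nonneg).trans_lt hs).ne').continuousAt
    |>.continuousWithinAt

lemma ContinuousOn.Gamma_div_Gamma {f g : ℝ → ℝ} {s : Set ℝ} (hf : ContinuousOn f s)
    (hg : ContinuousOn g s) (hf₀ : ∀ t ∈ s, 0 < f t) (hg₀ : ∀ t ∈ s, 0 < g t) :
    ContinuousOn (fun t => Gamma (f t) / Gamma (g t)) s :=
  ((continuousOn_Gamma_Ioi.comp hf hf₀).div (continuousOn_Gamma_Ioi.comp hg hg₀)) fun t ht =>
    (Gamma_pos_of_pos (hg₀ t ht)).ne'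

lemma Real.Gamma_div_Gamma_add_le_one {x a : ℝ} (hx : 2 ≤ x) (ha : 0 ≤ a) :
    Gamma x / Gamma (x + a) ≤ 1 :=
  div_le_one_of_le₀ (Gamma_strictMonoOn_Ici.monotoneOn hx (le_add_of_le_of_nonneg hx ha)
    (le_add_of_nonneg_right ha)) (Gamma_pos_of_pos (by linarith)).le

theorem integrableOn_Ioc_rpow_mul_iff {s c : ℝ} {h : ℝ → ℝ} (hc : 0 < c)
    (hcont : ContinuousOn h (Icc 0 c)) (hpos : ∀ t ∈ Icc 0 c, 0 < h t) :
    IntegrableOn (fun t => t ^ s * h t) (Ioc 0 c) ↔ -1 < s := by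
  have hrpow : ContinuousOn (fun t : ℝ => t ^ s) (Ioc 0 c) := fun t ht =>
    (continuousAt_rpow_const t s (Or.inl ht.1.ne')).continuousWithinAt
  rw [← intervalIntegral.integrableOn_Ioo_rpow_iff hc, ← integrableOn_Ioc_iff_integrableOn_Ioo]
  obtain ⟨t₀, ht₀, hmin⟩ := isCompact_Icc.exists_isMinOn (nonempty_Icc.2 hc.le) hcont
  obtain ⟨t₁, -, hmax⟩ := isCompact_Icc.exists_isMaxOn (nonempty_Icc.2 hc.le) hcont
  have hm := hpos t₀ ht₀
  constructor
  · intro hint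
    refine (hint.const_mul (h t₀)⁻¹).mono' (hrpow.aestronglyMeasurable measurableSet_Ioc) ?_
    filter_upwards [ae_restrict_mem measurableSet_Ioc] with t ht
    have hts : 0 < t ^ s := rpow_pos_of_pos ht.1 s
    rw [norm_of_nonneg hts.le, le_inv_mul_iff₀ hm, mul_comm]
    exact mul_le_mul_of_nonneg_left (hmin (Ioc_subset_Icc_self ht)) hts.le
  · intro hint
    refine (hint.const_mul (h t₁)).mono'
      ((hrpow.mul (hcont.mono Ioc_subset_Icc_self)).aestronglyMeasurable measurableSet_Ioc) ?_
    filter_upwards [ae_restrict_mem measurableSet_Ioc] with t ht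
    have hts : 0 < t ^ s := rpow_pos_of_pos ht.1 s
    rw [norm_of_nonneg (mul_pos hts (hpos t (Ioc_subset_Icc_self ht))).le, mul_comm]
    exact mul_le_mul_of_nonneg_right (hmax (Ioc_subset_Icc_self ht)) hts.le

section Integrand

variable (N : ℕ) {s β : ℝ}

lemma integrableOn_Ioi_one_rpow_mul_exp_mul_Gamma_div_pow {a₀ adot : ℝ} (hs : -1 < s)
    (hβ : 0 < β) (ha₀ : 0 ≤ a₀) (hadot : 0 ≤ adot) :
    IntegrableOn (fun t => t ^ s * exp (-β * t) * (Gamma (t + a₀) / Gamma (t + a₀ + adot)) ^ N)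
      (Ioi 1) := by
  have hcont : ContinuousOn (fun t => t ^ s * exp (-β * t) *
      (Gamma (t + a₀) / Gamma (t + a₀ + adot)) ^ N) (Ici 1) := by
    have hrpow : ContinuousOn (fun t : ℝ => t ^ s) (Ici 1) := fun t ht =>
      (continuousAt_rpow_const t s (Or.inl (zero_lt_one.trans_le ht).ne')).continuousWithinAt
    have hratio : ContinuousOn (fun t => Gamma (t + a₀) / Gamma (t + a₀ + adot)) (Ici 1) :=
      ContinuousOn.Gamma_div_Gamma (by fun_prop) (by fun_prop)
        (fun t ht => by simp only [mem_Ici] at ht; linarith)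
        fun t ht => by simp only [mem_Ici] at ht; linarith
    exact (hrpow.mul (continuous_exp.comp_continuousOn (by fun_prop))).mul (hratio.pow N)
  rw [← Ioc_union_Ioi_eq_Ioi one_le_two, integrableOn_union]
  refine ⟨(hcont.mono Icc_subset_Ici_self).integrableOn_Icc.mono_set Ioc_subset_Icc_self, ?_⟩
  refine (((integrableOn_rpow_mul_exp_neg_mul_rpow hs one_pos hβ).mono_set
    (Ioi_subset_Ioi zero_le_two))).mono'
    ((hcont.mono (Ioi_subset_Ici one_le_two)).aestronglyMeasurable measurableSet_Ioi) ?_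
  filter_upwards [ae_restrict_mem measurableSet_Ioi] with t (ht : 2 < t)
  have hratio : 0 ≤ Gamma (t + a₀) / Gamma (t + a₀ + adot) :=
    div_nonneg (Gamma_pos_of_pos (by linarith)).le (Gamma_pos_of_pos (by linarith)).le
  rw [rpow_one, norm_of_nonneg (by positivity)]
  exact mul_le_of_le_one_right (by positivity)
    (pow_le_one₀ hratio (Gamma_div_Gamma_add_le_one (by linarith) hadot))

lemma integrableOn_Ioc_rpow_mul_exp_mul_Gamma_div_Gamma_pow_iff {b c : ℝ} (hb : 0 < b)
    (hc : 0 < c) :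
    IntegrableOn (fun t => t ^ s * (exp (-β * t) * (Gamma (t + b) / Gamma (t + c)) ^ N))
      (Ioc 0 1) ↔ -1 < s := by
  refine integrableOn_Ioc_rpow_mul_iff one_pos ?_ fun t ht => ?_
  · exact (continuous_exp.comp_continuousOn (by fun_prop)).mul
      ((ContinuousOn.Gamma_div_Gamma (by fun_prop) (by fun_prop)
        (fun t ht => by linarith [ht.1]) fun t ht => by linarith [ht.1]).pow N)
  · have := Gamma_pos_of_pos (show 0 < t + b by linarith [ht.1])
    have := Gamma_pos_of_pos (show 0 < t + c by linarith [ht.1])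
    positivity

lemma integrableOn_Ioc_rpow_mul_exp_mul_Gamma_div_pow_iff_of_pos {a₀ adot : ℝ} (ha₀ : 0 < a₀)
    (hadot : 0 ≤ adot) :
    IntegrableOn (fun t => t ^ s * exp (-β * t) * (Gamma (t + a₀) / Gamma (t + a₀ + adot)) ^ N)
      (Ioc 0 1) ↔ -1 < s := by
  simp_rw [mul_assoc, add_assoc]
  exact integrableOn_Ioc_rpow_mul_exp_mul_Gamma_div_Gamma_pow_iff N ha₀ (by linarith)

lemma rpow_mul_Gamma_div_Gamma_add_pow {t : ℝ} (ht : 0 < t) (s a : ℝ) :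
    t ^ s * (Gamma t / Gamma (t + a)) ^ N = t ^ (s - N) * (Gamma (t + 1) / Gamma (t + a)) ^ N := by
  rw [Gamma_add_one ht.ne', mul_div_assoc, mul_pow, ← mul_assoc, rpow_sub ht, rpow_natCast,
    div_mul_cancel₀ _ (pow_pos ht N).ne']

lemma integrableOn_Ioc_rpow_mul_exp_mul_Gamma_div_pow_iff {adot : ℝ} (hadot : 0 < adot) :
    IntegrableOn (fun t => t ^ s * exp (-β * t) * (Gamma t / Gamma (t + adot)) ^ N)
      (Ioc 0 1) ↔ -1 < s - N := by
  rw [← integrableOn_Ioc_rpow_mul_exp_mul_Gamma_div_Gamma_pow_iff N one_pos hadot]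
  refine integrableOn_congr_fun (fun t ht => ?_) measurableSet_Ioc
  rw [mul_right_comm, rpow_mul_Gamma_div_Gamma_add_pow N ht.1]
  ring

end Integrand

theorem prior_propriety_general (N : ℕ) (α β a₀ adot : ℝ)
    (hα : 0 < α) (hβ : 0 < β) (ha₀ : 0 ≤ a₀) (hadot : 0 < adot) :
    IntegrableOn
        (fun t : ℝ => t ^ (α - 1) * Real.exp (-β * t) *
          (Real.Gamma (t + a₀) / Real.Gamma (t + a₀ + adot)) ^ N)
        (Set.Ioi 0) ↔
      (0 < a₀ ∨ (a₀ = 0 ∧ (N : ℝ) < α)) := by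
  rw [← Ioc_union_Ioi_eq_Ioi zero_le_one, integrableOn_union, and_iff_left
    (integrableOn_Ioi_one_rpow_mul_exp_mul_Gamma_div_pow N (by linarith) hβ ha₀ hadot.le)]
  rcases ha₀.lt_or_eq with ha₀ | rfl
  · simpa [ha₀] using
      (integrableOn_Ioc_rpow_mul_exp_mul_Gamma_div_pow_iff_of_pos N ha₀ hadot.le).2 (by linarith)
  · simp only [add_zero, lt_irrefl, false_or, true_and,
      integrableOn_Ioc_rpow_mul_exp_mul_Gamma_div_pow_iff N hadot]
    constructor <;> intro <;> linarith

/-- Propriety of the hierarchical shrinkage prior with `g ≡ 1`, `β > 0`. -/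
theorem prior_propriety (N : ℕ) (hN : 0 < N) (α β a₀ adot : ℝ)
    (hα : 0 < α) (hβ : 0 < β) (ha₀ : 0 ≤ a₀) (hadot : 0 < adot) :
    IntegrableOn
        (fun t : ℝ => t ^ (α - 1) * Real.exp (-β * t) *
          (Real.Gamma (t + a₀) / Real.Gamma (t + a₀ + adot)) ^ N)
        (Set.Ioi 0) ↔
      (0 < a₀ ∨ (a₀ = 0 ∧ (N : ℝ) < α)) :=
  prior_propriety_general N α β a₀ adot hα hβ ha₀ hadot
end

section
/- Limit of the hierarchical shrinkage factor under a single coordinate growing: let $f : (0,\infty) \to [0,\infty)$ be measurable with $0 < \int_0^\infty f < \infty$ and $\int_0^\infty t f(t) dt < \infty$, and let $c > 0$. Define for $k \in \mathbb{N}$ the ratio $\delta_k = \frac{\int_0^\infty t \, [\prod_{j=0}^{k-1}(t + c + j)]^{-1} f(t)\,dt}{\int_0^\infty [\prod_{j=0}^{k-1}(t + c + j)]^{-1} f(t)\,dt}$, and assume $\int_0^\varepsilon f(t)dt > 0$ for every $\varepsilon > 0$. Then $\lim_{k \to \infty} \delta_k = 0$. -/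
open MeasureTheory Filter Finset Set Topology

/-!
Let `w_k` be positive and decreasing on `[0, ∞)`. Splitting at `s > 0`, the part of
`∫ t w_k(t) f(t)` over `t ≤ s` is at most `s ∫ w_k f`, and the part over `t > s` is at most
`w_k(s) ∫ t f(t)`; on the other hand `∫ w_k f ≥ w_k(s/2) ∫_0^{s/2} f > 0`. Hence the weighted
mean is at most `s + (w_k(s) / w_k(s/2)) ∫ t f(t) / ∫_0^{s/2} f`.
For `w_k(t) = 1 / ∏_{j<k} (t + c + j)` the ratio
`w_k(s) / w_k(r) = ∏_{j<k} (r + c + j) / (s + c + j) ≤ exp (-(s - r) ∑_{j<k} 1 / (s + c + j))`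
tends to `0` because the harmonic series diverges.
-/

lemma tendsto_sum_range_inv_add_atTop {b : ℝ} (hb : 0 < b) :
    Tendsto (fun k : ℕ => ∑ j ∈ range k, (b + j)⁻¹) atTop atTop := by
  have h : ¬ Summable (fun j : ℕ => 1 / |j + b| ^ (1 : ℝ)) :=
    (Real.summable_one_div_nat_add_rpow b 1).not.2 (lt_irrefl 1)
  have hterm : ∀ j : ℕ, 1 / |j + b| ^ (1 : ℝ) = (b + j)⁻¹ := fun j => by
    rw [Real.rpow_one, abs_of_pos (by positivity), one_div, add_comm]
  simp only [hterm] at h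
  exact (not_summable_iff_tendsto_nat_atTop_of_nonneg fun j => by positivity).1 h

lemma prod_div_prod_add_le_exp {a b : ℝ} (ha : 0 < a) (hab : a ≤ b) (k : ℕ) :
    (∏ j ∈ range k, (a + j)) / ∏ j ∈ range k, (b + j) ≤
      Real.exp (-((b - a) * ∑ j ∈ range k, (b + j)⁻¹)) := by
  have hb : 0 < b := ha.trans_le hab
  rw [← prod_div_distrib, mul_sum, ← sum_neg_distrib, Real.exp_sum]
  refine prod_le_prod (fun j _ => by positivity) fun j _ => ?_
  have : 0 < b + j := by positivity
  calc (a + j) / (b + j) = -((b - a) * (b + j)⁻¹) + 1 := by field_simp; ring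
    _ ≤ _ := Real.add_one_le_exp _

lemma tendsto_prod_div_prod_add_nat {a b : ℝ} (ha : 0 < a) (hab : a < b) :
    Tendsto (fun k : ℕ => (∏ j ∈ range k, (a + j)) / ∏ j ∈ range k, (b + j)) atTop (𝓝 0) := by
  have hexp : Tendsto (fun k : ℕ => Real.exp (-((b - a) * ∑ j ∈ range k, (b + j)⁻¹)))
      atTop (𝓝 0) :=
    Real.tendsto_exp_atBot.comp <| tendsto_neg_atBot_iff.2 <|
      (tendsto_sum_range_inv_add_atTop (ha.trans hab)).const_mul_atTop (sub_pos.2 hab)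
  refine squeeze_zero (fun k => ?_) (prod_div_prod_add_le_exp ha hab.le) hexp
  have := ha.trans hab
  exact div_nonneg (prod_nonneg fun j _ => by positivity) (prod_nonneg fun j _ => by positivity)

section WeightedMean

variable {μ : Measure ℝ} {f w : ℝ → ℝ}

lemma integrableOn_Ioi_mul_of_antitoneOn {g : ℝ → ℝ} (hg : IntegrableOn g (Ioi 0) μ)
    (hw : Measurable w) (hw_pos : ∀ t, 0 < t → 0 < w t) (hw_anti : AntitoneOn w (Ici 0)) :
    IntegrableOn (fun t => w t * g t) (Ioi 0) μ := by
  refine hg.bdd_mul hw.aestronglyMeasurable (c := w 0) ?_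
  filter_upwards [ae_restrict_mem measurableSet_Ioi] with t ht
  rw [Real.norm_of_nonneg (hw_pos t ht).le]
  exact hw_anti self_mem_Ici (mem_Ici.2 ht.le) ht.le

lemma mul_setIntegral_Ioo_le_setIntegral_Ioi (hf : ∀ t, 0 ≤ f t)
    (hf_int : IntegrableOn f (Ioi 0) μ) (hw_int : IntegrableOn (fun t => w t * f t) (Ioi 0) μ)
    (hw_pos : ∀ t, 0 < t → 0 < w t) (hw_anti : AntitoneOn w (Ici 0)) {r : ℝ} (hr : 0 < r) :
    w r * ∫ t in Ioo 0 r, f t ∂μ ≤ ∫ t in Ioi 0, w t * f t ∂μ := by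
  have hsub : Ioo 0 r ⊆ Ioi (0 : ℝ) := Ioo_subset_Ioi_self
  rw [← integral_const_mul]
  calc ∫ t in Ioo 0 r, w r * f t ∂μ ≤ ∫ t in Ioo 0 r, w t * f t ∂μ :=
        setIntegral_mono_on ((hf_int.mono_set hsub).const_mul _) (hw_int.mono_set hsub)
          measurableSet_Ioo fun t ht =>
            mul_le_mul_of_nonneg_right (hw_anti (mem_Ici.2 ht.1.le) (mem_Ici.2 hr.le) ht.2.le)
              (hf t)
    _ ≤ ∫ t in Ioi 0, w t * f t ∂μ :=
        setIntegral_mono_set hw_int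
          (ae_restrict_of_forall_mem measurableSet_Ioi fun t ht =>
            mul_nonneg (hw_pos t ht).le (hf t))
          hsub.eventuallyLE

lemma setIntegral_Ioi_mul_weight_le (hf : ∀ t, 0 ≤ f t)
    (hw_int : IntegrableOn (fun t => w t * f t) (Ioi 0) μ)
    (hw_int₁ : IntegrableOn (fun t => t * w t * f t) (Ioi 0) μ)
    (hf_int₁ : IntegrableOn (fun t => t * f t) (Ioi 0) μ)
    (hw_pos : ∀ t, 0 < t → 0 < w t) (hw_anti : AntitoneOn w (Ici 0)) {s : ℝ} (hs : 0 < s) :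
    ∫ t in Ioi 0, t * w t * f t ∂μ ≤
      s * ∫ t in Ioi 0, w t * f t ∂μ + w s * ∫ t in Ioi 0, t * f t ∂μ := by
  rw [← integral_const_mul, ← integral_const_mul, ← integral_add (hw_int.const_mul s)
    (hf_int₁.const_mul (w s))]
  refine setIntegral_mono_on hw_int₁ ((hw_int.const_mul s).add (hf_int₁.const_mul (w s)))
    measurableSet_Ioi fun t ht => ?_
  have hwf : 0 ≤ w t * f t := mul_nonneg (hw_pos t ht).le (hf t)
  have htf : 0 ≤ t * f t := mul_nonneg (le_of_lt ht) (hf t)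
  rcases le_or_gt t s with hts | hst
  · have := mul_le_mul_of_nonneg_right hts hwf
    linarith [mul_nonneg (hw_pos s hs).le htf, mul_assoc t (w t) (f t)]
  · have := mul_le_mul_of_nonneg_right
      (hw_anti (mem_Ici.2 hs.le) (mem_Ici.2 (le_of_lt ht)) hst.le) htf
    linarith [mul_nonneg hs.le hwf, show t * w t * f t = w t * (t * f t) by ring]

lemma setIntegral_mul_weight_div_le (hf : ∀ t, 0 ≤ f t) (hf_int : IntegrableOn f (Ioi 0) μ)
    (hf_int₁ : IntegrableOn (fun t => t * f t) (Ioi 0) μ) (hw : Measurable w)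
    (hw_pos : ∀ t, 0 < t → 0 < w t) (hw_anti : AntitoneOn w (Ici 0)) {r s : ℝ} (hr : 0 < r)
    (hs : 0 < s) (hA : 0 < ∫ t in Ioo 0 r, f t ∂μ) :
    (∫ t in Ioi 0, t * w t * f t ∂μ) / ∫ t in Ioi 0, w t * f t ∂μ ≤
      s + w s / w r * ((∫ t in Ioi 0, t * f t ∂μ) / ∫ t in Ioo 0 r, f t ∂μ) := by
  have hw_int := integrableOn_Ioi_mul_of_antitoneOn hf_int hw hw_pos hw_anti
  have hw_int₁ : IntegrableOn (fun t => t * w t * f t) (Ioi 0) μ := by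
    simpa only [mul_assoc, mul_left_comm] using
      integrableOn_Ioi_mul_of_antitoneOn hf_int₁ hw hw_pos hw_anti
  have hM : 0 ≤ ∫ t in Ioi 0, t * f t ∂μ :=
    setIntegral_nonneg measurableSet_Ioi fun t ht => mul_nonneg (le_of_lt ht) (hf t)
  have hwA : 0 < w r * ∫ t in Ioo 0 r, f t ∂μ := mul_pos (hw_pos r hr) hA
  have hD := mul_setIntegral_Ioo_le_setIntegral_Ioi hf hf_int hw_int hw_pos hw_anti hr
  have hD_pos := hwA.trans_le hD
  calc (∫ t in Ioi 0, t * w t * f t ∂μ) / ∫ t in Ioi 0, w t * f t ∂μ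
      ≤ (s * (∫ t in Ioi 0, w t * f t ∂μ) + w s * ∫ t in Ioi 0, t * f t ∂μ) /
          ∫ t in Ioi 0, w t * f t ∂μ := by
        gcongr
        exact setIntegral_Ioi_mul_weight_le hf hw_int hw_int₁ hf_int₁ hw_pos hw_anti hs
    _ = s + w s * (∫ t in Ioi 0, t * f t ∂μ) / ∫ t in Ioi 0, w t * f t ∂μ := by
        rw [add_div, mul_div_cancel_right₀ _ hD_pos.ne']
    _ ≤ s + w s * (∫ t in Ioi 0, t * f t ∂μ) / (w r * ∫ t in Ioo 0 r, f t ∂μ) := by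
        have := hw_pos s hs
        gcongr
    _ = _ := by rw [div_mul_div_comm]

lemma tendsto_setIntegral_mul_weight_div_zero (hf : ∀ t, 0 ≤ f t)
    (hf_int : IntegrableOn f (Ioi 0) μ) (hf_int₁ : IntegrableOn (fun t => t * f t) (Ioi 0) μ)
    (hf_near : ∀ ε, 0 < ε → 0 < ∫ t in Ioo 0 ε, f t ∂μ) {w : ℕ → ℝ → ℝ}
    (hw : ∀ k, Measurable (w k)) (hw_pos : ∀ k t, 0 < t → 0 < w k t)
    (hw_anti : ∀ k, AntitoneOn (w k) (Ici 0))
    (hw_ratio : ∀ r s, 0 < r → r < s → Tendsto (fun k => w k s / w k r) atTop (𝓝 0)) :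
    Tendsto (fun k => (∫ t in Ioi 0, t * w k t * f t ∂μ) / ∫ t in Ioi 0, w k t * f t ∂μ)
      atTop (𝓝 0) := by
  refine tendsto_order.2 ⟨fun a ha => Eventually.of_forall fun k => ha.trans_le ?_,
    fun ε hε => ?_⟩
  · exact div_nonneg
      (setIntegral_nonneg measurableSet_Ioi fun t ht =>
        mul_nonneg (mul_nonneg (le_of_lt ht) (hw_pos k t ht).le) (hf t))
      (setIntegral_nonneg measurableSet_Ioi fun t ht => mul_nonneg (hw_pos k t ht).le (hf t))
  · have hr : 0 < ε / 4 := by positivity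
    have hs : 0 < ε / 2 := by positivity
    have hbound := ((hw_ratio (ε / 4) (ε / 2) hr (by linarith)).mul_const
      ((∫ t in Ioi 0, t * f t ∂μ) / ∫ t in Ioo 0 (ε / 4), f t ∂μ)).const_add (ε / 2)
    rw [zero_mul, add_zero] at hbound
    filter_upwards [hbound.eventually_lt_const (by linarith : ε / 2 < ε)] with k hk
    exact (setIntegral_mul_weight_div_le hf hf_int hf_int₁ (hw k) (hw_pos k) (hw_anti k) hr hs
      (hf_near _ hr)).trans_lt hk

end WeightedMean

theorem shrinkage_factor_tendsto_zero_general (f : ℝ → ℝ) (c : ℝ) (hc : 0 < c)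
    (hpos : ∀ t, 0 ≤ f t)
    (hint : IntegrableOn f (Set.Ioi 0))
    (hint1 : IntegrableOn (fun t => t * f t) (Set.Ioi 0))
    (hnear : ∀ ε : ℝ, 0 < ε → 0 < ∫ t in Set.Ioo (0 : ℝ) ε, f t) :
    Tendsto
      (fun k : ℕ =>
        (∫ t in Set.Ioi (0 : ℝ),
            t * (∏ j ∈ Finset.range k, (t + c + j))⁻¹ * f t) /
          (∫ t in Set.Ioi (0 : ℝ),
            (∏ j ∈ Finset.range k, (t + c + j))⁻¹ * f t))
      atTop (nhds 0) := by
  have hprod_pos : ∀ (k : ℕ) {t : ℝ}, 0 ≤ t → 0 < ∏ j ∈ range k, (t + c + j) :=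
    fun k t ht => prod_pos fun j _ => by positivity
  refine tendsto_setIntegral_mul_weight_div_zero hpos hint hint1 hnear (fun k => by fun_prop)
    (fun k t ht => inv_pos.2 (hprod_pos k ht.le)) (fun k s hs t _ hst => ?_)
    (fun r s hr hrs => ?_)
  · have hs' : 0 ≤ s := hs
    exact inv_anti₀ (hprod_pos k hs)
      (Finset.prod_le_prod (fun j _ => by positivity) fun j _ => by gcongr)
  · simp only [inv_div_inv]
    exact tendsto_prod_div_prod_add_nat (by positivity) (by linarith)

/-- The shrinkage factor tends to zero as one coordinate grows. -/
theorem shrinkage_factor_tendsto_zero (f : ℝ → ℝ) (c : ℝ) (hc : 0 < c)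
    (hmeas : Measurable f) (hpos : ∀ t, 0 ≤ f t)
    (hint : IntegrableOn f (Set.Ioi 0))
    (hintpos : 0 < ∫ t in Set.Ioi (0 : ℝ), f t)
    (hint1 : IntegrableOn (fun t => t * f t) (Set.Ioi 0))
    (hnear : ∀ ε : ℝ, 0 < ε → 0 < ∫ t in Set.Ioo (0 : ℝ) ε, f t) :
    Tendsto
      (fun k : ℕ =>
        (∫ t in Set.Ioi (0 : ℝ),
            t * (∏ j ∈ Finset.range k, (t + c + j))⁻¹ * f t) /
          (∫ t in Set.Ioi (0 : ℝ),
            (∏ j ∈ Finset.range k, (t + c + j))⁻¹ * f t))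
      atTop (nhds 0) :=
  shrinkage_factor_tendsto_zero_general f c hc hpos hint hint1 hnear
end

section
/- Pointwise limit of normalized Gamma ratios: for fixed $c > 0$ and $u > 0$, $\lim_{k \to \infty} \frac{\Gamma(c + k)}{\Gamma(u/\log k + c + k)} = e^{-u}$, where the limit is along integers $k \ge 2$. -/
open Filter Topology

/-!
Log-convexity of `Γ`, applied with `x + s` between `x` and `x + 1` and with `x + 1` between
`x + s` and `x + s + 1`, gives Gautschi-type bounds for `0 < s < 1`:
`x ^ (-s) ≤ Γ(x) / Γ(x + s) ≤ (1 + s / x) * x ^ (-s)`.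
With `x = c + k` and `s = u / log k`, the correction factor `1 + s / x` tends to `1`, and
`(c + k) ^ (-u / log k) = exp (-u * log (c + k) / log k) → exp (-u)`.
-/

namespace Real

lemma Gamma_add_le_Gamma_mul_rpow {x s : ℝ} (hx : 0 < x) (hs : 0 < s) (hs1 : s < 1) :
    Gamma (x + s) ≤ Gamma x * x ^ s := by
  have hG : 0 < Gamma x := Gamma_pos_of_pos hx
  have h := Gamma_mul_add_mul_le_rpow_Gamma_mul_rpow_Gamma hx (by linarith : 0 < x + 1)
    (by linarith : 0 < 1 - s) hs (by ring)
  rw [show (1 - s) * x + s * (x + 1) = x + s by ring, Gamma_add_one hx.ne',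
    mul_rpow hx.le hG.le] at h
  calc Gamma (x + s) ≤ Gamma x ^ (1 - s) * (x ^ s * Gamma x ^ s) := h
    _ = Gamma x ^ ((1 - s) + s) * x ^ s := by rw [rpow_add hG]; ring
    _ = Gamma x * x ^ s := by rw [sub_add_cancel, rpow_one]

lemma mul_Gamma_le_Gamma_add_mul_rpow {x s : ℝ} (hx : 0 < x) (hs : 0 < s) (hs1 : s < 1) :
    x * Gamma x ≤ Gamma (x + s) * (x + s) ^ (1 - s) := by
  have hxs : 0 < x + s := by linarith
  have hG : 0 < Gamma (x + s) := Gamma_pos_of_pos hxs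
  have h := Gamma_mul_add_mul_le_rpow_Gamma_mul_rpow_Gamma hxs (by linarith : 0 < x + s + 1)
    hs (by linarith : 0 < 1 - s) (by ring)
  rw [show s * (x + s) + (1 - s) * (x + s + 1) = x + 1 by ring, Gamma_add_one hx.ne',
    Gamma_add_one hxs.ne', mul_rpow hxs.le hG.le] at h
  calc x * Gamma x ≤ Gamma (x + s) ^ s * ((x + s) ^ (1 - s) * Gamma (x + s) ^ (1 - s)) := h
    _ = Gamma (x + s) ^ (s + (1 - s)) * (x + s) ^ (1 - s) := by rw [rpow_add hG]; ring
    _ = Gamma (x + s) * (x + s) ^ (1 - s) := by rw [add_sub_cancel, rpow_one]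

lemma rpow_neg_le_Gamma_div_Gamma_add {x s : ℝ} (hx : 0 < x) (hs : 0 < s) (hs1 : s < 1) :
    x ^ (-s) ≤ Gamma x / Gamma (x + s) := by
  rw [rpow_neg hx.le, inv_eq_one_div, div_le_div_iff₀ (rpow_pos_of_pos hx s)
    (Gamma_pos_of_pos (by linarith)), one_mul]
  exact Gamma_add_le_Gamma_mul_rpow hx hs hs1

lemma Gamma_div_Gamma_add_le {x s : ℝ} (hx : 0 < x) (hs : 0 < s) (hs1 : s < 1) :
    Gamma x / Gamma (x + s) ≤ (1 + s / x) * x ^ (-s) := by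
  have hxs : 0 < x + s := by linarith
  have h1 : 1 ≤ 1 + s / x := le_add_of_nonneg_right (div_pos hs hx).le
  calc Gamma x / Gamma (x + s) ≤ (x + s) ^ (1 - s) / x := by
        rw [div_le_div_iff₀ (Gamma_pos_of_pos hxs) hx, mul_comm (Gamma x), mul_comm (_ ^ _)]
        exact mul_Gamma_le_Gamma_add_mul_rpow hx hs hs1
    _ = (1 + s / x) ^ (1 - s) * x ^ (-s) := by
        rw [show x + s = (1 + s / x) * x by field_simp, mul_rpow (by positivity) hx.le,
          mul_div_assoc, rpow_sub hx, rpow_one, rpow_neg hx.le]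
        field_simp
    _ ≤ (1 + s / x) * x ^ (-s) := by
        gcongr
        exact rpow_le_self_of_one_le h1 (by linarith)

lemma tendsto_log_add_div_log (c : ℝ) :
    Tendsto (fun x => log (x + c) / log x) atTop (𝓝 1) := by
  have h := (tendsto_log_comp_add_sub_log c).mul tendsto_log_atTop.inv_tendsto_atTop
  rw [zero_mul] at h
  have h1 := tendsto_const_nhds (x := (1 : ℝ)).add h
  rw [add_zero] at h1
  refine h1.congr' ?_
  filter_upwards [eventually_gt_atTop 1] with x hx
  rw [Pi.inv_apply, ← div_eq_mul_inv, sub_div, div_self (log_pos hx).ne']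
  ring

lemma tendsto_add_rpow_div_log (c u : ℝ) :
    Tendsto (fun x => (x + c) ^ (u / log x)) atTop (𝓝 (exp u)) := by
  have h := ((tendsto_log_add_div_log c).const_mul u).rexp
  rw [mul_one] at h
  refine h.congr' ?_
  filter_upwards [eventually_gt_atTop (-c)] with x hx
  rw [rpow_def_of_pos (by linarith)]
  ring_nf

end Real

open Real

theorem gamma_ratio_log_limit_general (c u : ℝ) (hu : 0 < u) :
    Tendsto
      (fun k : ℕ => Real.Gamma (c + k) / Real.Gamma (u / Real.log k + c + k))
      atTop (nhds (Real.exp (-u))) := by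
  have hlog : Tendsto (fun k : ℕ => log k) atTop atTop :=
    tendsto_log_atTop.comp tendsto_natCast_atTop_atTop
  have hs : Tendsto (fun k : ℕ => u / log k) atTop (𝓝 0) := by
    simpa [div_eq_mul_inv] using hlog.inv_tendsto_atTop.const_mul u
  have hx : Tendsto (fun k : ℕ => c + (k : ℝ)) atTop atTop :=
    tendsto_atTop_add_const_left _ c tendsto_natCast_atTop_atTop
  have hlower : Tendsto (fun k : ℕ => (c + k) ^ (-(u / log k))) atTop (𝓝 (exp (-u))) := by
    simpa [Function.comp_def, add_comm, neg_div] using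
      (tendsto_add_rpow_div_log c (-u)).comp tendsto_natCast_atTop_atTop
  have hupper : Tendsto (fun k : ℕ => (1 + u / log k / (c + k)) * (c + k) ^ (-(u / log k)))
      atTop (𝓝 (exp (-u))) := by
    simpa using (tendsto_const_nhds (x := (1 : ℝ)).add (hs.div_atTop hx)).mul hlower
  have hsmall : ∀ᶠ k : ℕ in atTop, 0 < c + k ∧ 0 < u / log k ∧ u / log k < 1 := by
    filter_upwards [hx.eventually_gt_atTop 0, hlog.eventually_gt_atTop u] with k hxk hk
    have hk0 : 0 < log k := hu.trans hk
    exact ⟨hxk, div_pos hu hk0, (div_lt_one hk0).mpr hk⟩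
  refine tendsto_of_tendsto_of_tendsto_of_le_of_le' hlower hupper ?_ ?_ <;>
    filter_upwards [hsmall] with k ⟨hxk, hs0, hs1⟩ <;>
    rw [show u / log k + c + k = c + k + u / log k by ring]
  · exact rpow_neg_le_Gamma_div_Gamma_add hxk hs0 hs1
  · exact Gamma_div_Gamma_add_le hxk hs0 hs1

/-- `Γ(c + k) / Γ(u / log k + c + k) → e^{-u}` as `k → ∞` along integers. -/
theorem gamma_ratio_log_limit (c u : ℝ) (hc : 0 < c) (hu : 0 < u) :
    Tendsto
      (fun k : ℕ => Real.Gamma (c + k) / Real.Gamma (u / Real.log k + c + k))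
      atTop (nhds (Real.exp (-u))) :=
  gamma_ratio_log_limit_general c u hu
end
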